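/- Let X be a measurable space with σ-finite measures λ and τ, and t : X → X a bimeasurable bijection with t_*(λ) equivalent to τ, with Radon-Nikodym derivative M = d(t_*λ)/dτ. Then d((t⁻¹)_*τ)/dλ = (1/M) ∘ t (λ-almost everywhere). -/
import Mathlib


open MeasureTheory

/-- If `t_*(λ)` is equivalent to `τ` with Radon–Nikodym derivative `M = d(t_*λ)/dτ`,
then `d((t⁻¹)_*τ)/dλ = (1/M) ∘ t` holds `λ`-almost everywhere. -/
theorem stmt_17 {X : Type*} [MeasurableSpace X]
    (lam tau : Measure X) [SigmaFinite lam] [SigmaFinite tau]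
    (t : X ≃ᵐ X)
    (h1 : Measure.map (⇑t) lam ≪ tau) (h2 : tau ≪ Measure.map (⇑t) lam) :
    (Measure.map (⇑t.symm) tau).rnDeriv lam =ᵐ[lam]
      fun x => ((Measure.map (⇑t) lam).rnDeriv tau (t x))⁻¹ := by
  have he : MeasurableEmbedding (⇑t.symm) := t.symm.measurableEmbedding
  have hmap : (Measure.map (⇑t) lam).map (⇑t.symm) = lam := by
    rw [Measure.map_map t.symm.measurable t.measurable]
    simp
  have hσ : SigmaFinite (Measure.map (⇑t) lam) := t.measurableEmbedding.sigmaFinite_map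
  have h := he.rnDeriv_map tau (Measure.map (⇑t) lam)
  rw [hmap] at h
  -- h : (fun x ↦ (tau.map t.symm).rnDeriv lam (t.symm x)) =ᵐ[map t lam] tau.rnDeriv (map t lam)
  have hinv := Measure.inv_rnDeriv h1
  -- hinv : ((map t lam).rnDeriv tau)⁻¹ =ᵐ[map t lam] tau.rnDeriv (map t lam)
  have hcomb : (fun x ↦ (tau.map (⇑t.symm)).rnDeriv lam (t.symm x))
      =ᵐ[Measure.map (⇑t) lam] fun x ↦ ((Measure.map (⇑t) lam).rnDeriv tau x)⁻¹ :=
    h.trans hinv.symm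
  rw [Filter.EventuallyEq, t.measurableEmbedding.ae_map_iff] at hcomb
  filter_upwards [hcomb] with x hx
  simpa using hx
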